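/- Let A, C ∈ ℝ^{n×n}, B, D ∈ ℝ^{n×m}, L ∈ ℝ^{m×n}, let Q ∈ ℝ^{n×n} and R ∈ ℝ^{m×m} be symmetric positive definite, let W ∈ ℝ^{n×n} be symmetric positive semidefinite, and let γ ∈ [0,1). Assume ρ(M_L) < 1, where M_L = (A+BL)⊗(A+BL) + (C+DL)⊗(C+DL). Let P be a symmetric positive definite solution of the discounted stochastic Lyapunov equation P = γ(A+BL)ᵀP(A+BL) + γ(C+DL)ᵀP(C+DL) + LᵀRL + Q. For any symmetric positive semidefinite m₀ define the second-moment sequence m_{k+1} = (A+BL) m_k (A+BL)ᵀ + (C+DL) m_k (C+DL)ᵀ + W. Then the series Σ_{k=0}^{∞} γ^k · tr((Q + LᵀRL) m_k) converges, and its sum equals tr(P m₀) + (γ/(1−γ)) · tr(P W). -/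

import Mathlib

open Matrix Kronecker

/-- The spectral radius of a real square matrix: the maximum modulus of its
complex eigenvalues. -/
noncomputable def specRad {ι : Type*} [Fintype ι] [DecidableEq ι]
    (M : Matrix ι ι ℝ) : ℝ :=
  sSup ((fun μ : ℂ => ‖μ‖) '' spectrum ℂ (M.map Complex.ofReal))

/-- The second-moment sequence `m_{k+1} = Acl m_k Aclᵀ + Ccl m_k Cclᵀ + W`. -/
noncomputable def momSeq {n : ℕ} (Acl Ccl W m0 : Matrix (Fin n) (Fin n) ℝ) :
    ℕ → Matrix (Fin n) (Fin n) ℝ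
  | 0 => m0
  | k + 1 => Acl * momSeq Acl Ccl W m0 k * Aclᵀ + Ccl * momSeq Acl Ccl W m0 k * Cclᵀ + W

/-!
With `a_k = γᵏ tr(P m_k)`, the Lyapunov equation and `tr(P m_{k+1}) = tr((AᵀPA + CᵀPC) m_k) + tr(PW)`
give the telescoping identity `γᵏ tr((Q + LᵀRL) m_k) = a_k - a_{k+1} + γᵏ⁺¹ tr(PW)`, so the partial
sums are bounded by `a_0 + γ/(1-γ) tr(PW)`. As `Q` is positive definite, `ε P ≤ Q` for some `ε > 0`,
so `ε a_k` is dominated by the summable terms of the series; hence `a_k → 0` and the partial sums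
converge to `tr(P m_0) + γ/(1-γ) tr(PW)`.
-/

open Filter Topology
open scoped MatrixOrder ComplexOrder

theorem hasSum_of_eq_sub_add_of_mul_le {f a b : ℕ → ℝ} {β ε : ℝ} (hε : 0 < ε)
    (ha : ∀ k, 0 ≤ a k) (hb : ∀ k, 0 ≤ b k) (hbβ : HasSum b β)
    (hf : ∀ k, f k = a k - a (k + 1) + b k) (haf : ∀ k, ε * a k ≤ f k) :
    HasSum f (a 0 + β) := by
  have hf0 : ∀ k, 0 ≤ f k := fun k => (mul_nonneg hε.le (ha k)).trans (haf k)
  have hpartial : ∀ N, ∑ k ∈ Finset.range N, f k = a 0 - a N + ∑ k ∈ Finset.range N, b k := by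
    intro N
    simp only [hf, Finset.sum_add_distrib, Finset.sum_range_sub']
  have hfsum : Summable f := by
    refine summable_of_sum_range_le hf0 (c := a 0 + β) fun N => ?_
    rw [hpartial]
    linarith [ha N, sum_le_hasSum (Finset.range N) (fun k _ => hb k) hbβ]
  have hasum : Summable a :=
    (hfsum.mul_left ε⁻¹).of_nonneg_of_le ha fun k => by
      rw [le_inv_mul_iff₀ hε]; exact haf k
  rw [hasSum_iff_tendsto_nat_of_nonneg hf0]
  simp_rw [hpartial]
  simpa using (tendsto_const_nhds.sub hasum.tendsto_atTop_zero).add hbβ.tendsto_sum_nat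

namespace Matrix

variable {ι 𝕜 : Type*} [Fintype ι] [RCLike 𝕜]

theorem PosSemidef.trace_mul_nonneg {X Y : Matrix ι ι 𝕜} (hX : X.PosSemidef)
    (hY : Y.PosSemidef) : 0 ≤ (X * Y).trace := by
  classical
  obtain ⟨B, rfl⟩ := CStarAlgebra.nonneg_iff_eq_star_mul_self.mp hX.nonneg
  rw [star_eq_conjTranspose, Matrix.mul_assoc, trace_mul_comm]
  exact (hY.mul_mul_conjTranspose_same B).trace_nonneg

theorem trace_mul_le_trace_mul_of_le {M N X : Matrix ι ι 𝕜} (hMN : M ≤ N)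
    (hX : X.PosSemidef) : (M * X).trace ≤ (N * X).trace := by
  rw [← sub_nonneg, ← trace_sub, ← sub_mul]
  exact (le_iff.mp hMN).trace_mul_nonneg hX

theorem PosDef.exists_pos_smul_le [DecidableEq ι] {Q P : Matrix ι ι 𝕜} (hQ : Q.PosDef)
    (hP : P.IsHermitian) : ∃ ε > (0 : ℝ), ε • P ≤ Q := by
  cases isEmpty_or_nonempty ι
  · exact ⟨1, one_pos, (Subsingleton.elim _ _).le⟩
  obtain ⟨r, hr, hrQ⟩ : ∃ r > 0, algebraMap ℝ _ r ≤ Q := by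
    rw [CFC.exists_pos_algebraMap_le_iff hQ.isHermitian.isSelfAdjoint,
      hQ.isHermitian.spectrum_real_eq_range_eigenvalues]
    rintro _ ⟨i, rfl⟩
    exact hQ.eigenvalues_pos i
  obtain ⟨c, hc⟩ := (Set.finite_range hP.eigenvalues).bddAbove
  have hPc : P ≤ algebraMap ℝ _ (max c 1) := by
    refine le_algebraMap_of_spectrum_le (fun x hx => ?_) hP.isSelfAdjoint
    rw [hP.spectrum_real_eq_range_eigenvalues] at hx
    exact (hc hx).trans (le_max_left c 1)
  have hc1 : 0 < max c 1 := lt_max_of_lt_right one_pos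
  refine ⟨r / max c 1, div_pos hr hc1, ?_⟩
  calc (r / max c 1) • P ≤ (r / max c 1) • algebraMap ℝ _ (max c 1) :=
        smul_le_smul_of_nonneg_left hPc (div_pos hr hc1).le
    _ = algebraMap ℝ _ r := by rw [Algebra.smul_def, ← map_mul, div_mul_cancel₀ _ hc1.ne']
    _ ≤ Q := hrQ

end Matrix

section momSeq

variable {n : ℕ} {Acl Ccl W m0 : Matrix (Fin n) (Fin n) ℝ}

theorem momSeq_posSemidef (hW : W.PosSemidef) (hm0 : m0.PosSemidef) (k : ℕ) :
    (momSeq Acl Ccl W m0 k).PosSemidef := by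
  induction k with
  | zero => exact hm0
  | succ k ih =>
    have hA := ih.mul_mul_conjTranspose_same Acl
    have hC := ih.mul_mul_conjTranspose_same Ccl
    rw [conjTranspose_eq_transpose_of_trivial] at hA hC
    exact (hA.add hC).add hW

theorem trace_mul_momSeq_succ (P : Matrix (Fin n) (Fin n) ℝ) (k : ℕ) :
    (P * momSeq Acl Ccl W m0 (k + 1)).trace =
      ((Aclᵀ * P * Acl + Cclᵀ * P * Ccl) * momSeq Acl Ccl W m0 k).trace + (P * W).trace := by
  have hcycle : ∀ X Y : Matrix (Fin n) (Fin n) ℝ,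
      (P * (X * Y * Xᵀ)).trace = (Xᵀ * P * X * Y).trace :=
    fun X Y => by simp only [← Matrix.mul_assoc, trace_mul_comm _ Xᵀ]
  simp only [momSeq, Matrix.mul_add, Matrix.add_mul, trace_add, hcycle]

theorem discounted_trace_mul_momSeq_eq {γ : ℝ} {P G : Matrix (Fin n) (Fin n) ℝ}
    (hP : P = γ • (Aclᵀ * P * Acl) + γ • (Cclᵀ * P * Ccl) + G) (k : ℕ) :
    γ ^ k * (G * momSeq Acl Ccl W m0 k).trace =
      γ ^ k * (P * momSeq Acl Ccl W m0 k).trace -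
        γ ^ (k + 1) * (P * momSeq Acl Ccl W m0 (k + 1)).trace + γ ^ (k + 1) * (P * W).trace := by
  have hG : G = P - γ • (Aclᵀ * P * Acl + Cclᵀ * P * Ccl) := by
    rw [eq_sub_iff_add_eq, smul_add]
    conv_rhs => rw [hP]
    abel
  rw [trace_mul_momSeq_succ, hG, Matrix.sub_mul, trace_sub, Matrix.smul_mul, trace_smul,
    smul_eq_mul, pow_succ]
  ring

end momSeq

theorem stmt2_general {n m : ℕ} (A C : Matrix (Fin n) (Fin n) ℝ)
    (B D : Matrix (Fin n) (Fin m) ℝ) (L : Matrix (Fin m) (Fin n) ℝ)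
    (Q : Matrix (Fin n) (Fin n) ℝ) (R : Matrix (Fin m) (Fin m) ℝ)
    (W : Matrix (Fin n) (Fin n) ℝ) (γ : ℝ)
    (hQ : Q.PosDef) (hR : R.PosDef) (hW : W.PosSemidef)
    (hγ0 : 0 ≤ γ) (hγ1 : γ < 1)
    (P : Matrix (Fin n) (Fin n) ℝ) (hP : P.PosDef)
    (hlyap : P = γ • ((A + B * L)ᵀ * P * (A + B * L)) +
      γ • ((C + D * L)ᵀ * P * (C + D * L)) + Lᵀ * R * L + Q)
    (m0 : Matrix (Fin n) (Fin n) ℝ) (hm0 : m0.PosSemidef) :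
    HasSum (fun k => γ ^ k * ((Q + Lᵀ * R * L) * momSeq (A + B * L) (C + D * L) W m0 k).trace)
      ((P * m0).trace + (γ / (1 - γ)) * (P * W).trace) := by
  have hLRL : (Lᵀ * R * L).PosSemidef := by
    simpa only [conjTranspose_eq_transpose_of_trivial] using
      hR.posSemidef.conjTranspose_mul_mul_same L
  obtain ⟨ε, hε, hεQ⟩ := hQ.exists_pos_smul_le hP.isHermitian
  have hεG : ε • P ≤ Q + Lᵀ * R * L := hεQ.trans (le_add_of_nonneg_right hLRL.nonneg)
  set M := momSeq (A + B * L) (C + D * L) W m0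
  have hM : ∀ k, (M k).PosSemidef := momSeq_posSemidef hW hm0
  have hgeom : HasSum (fun k => γ ^ (k + 1) * (P * W).trace) (γ / (1 - γ) * (P * W).trace) := by
    simpa only [pow_succ', div_eq_mul_inv] using
      ((hasSum_geometric_of_lt_one hγ0 hγ1).mul_left γ).mul_right (P * W).trace
  have hdom : ∀ k, ε * (γ ^ k * (P * M k).trace) ≤ γ ^ k * ((Q + Lᵀ * R * L) * M k).trace := by
    intro k
    calc ε * (γ ^ k * (P * M k).trace) = γ ^ k * ((ε • P) * M k).trace := by
          rw [Matrix.smul_mul, trace_smul, smul_eq_mul]; ring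
      _ ≤ _ := mul_le_mul_of_nonneg_left (trace_mul_le_trace_mul_of_le hεG (hM k))
          (pow_nonneg hγ0 k)
  have hlyap' : P = γ • ((A + B * L)ᵀ * P * (A + B * L)) +
      γ • ((C + D * L)ᵀ * P * (C + D * L)) + (Q + Lᵀ * R * L) := hlyap.trans (by abel)
  have key := hasSum_of_eq_sub_add_of_mul_le (a := fun k => γ ^ k * (P * M k).trace) hε
    (fun k => mul_nonneg (pow_nonneg hγ0 k) (hP.posSemidef.trace_mul_nonneg (hM k)))
    (fun k => mul_nonneg (pow_nonneg hγ0 _) (hP.posSemidef.trace_mul_nonneg hW)) hgeom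
    (discounted_trace_mul_momSeq_eq hlyap') hdom
  simpa [M, momSeq] using key

theorem stmt2 {n m : ℕ} (A C : Matrix (Fin n) (Fin n) ℝ)
    (B D : Matrix (Fin n) (Fin m) ℝ) (L : Matrix (Fin m) (Fin n) ℝ)
    (Q : Matrix (Fin n) (Fin n) ℝ) (R : Matrix (Fin m) (Fin m) ℝ)
    (W : Matrix (Fin n) (Fin n) ℝ) (γ : ℝ)
    (hQ : Q.PosDef) (hR : R.PosDef) (hW : W.PosSemidef)
    (hγ0 : 0 ≤ γ) (hγ1 : γ < 1)
    (hstab : specRad ((A + B * L) ⊗ₖ (A + B * L) + (C + D * L) ⊗ₖ (C + D * L)) < 1)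
    (P : Matrix (Fin n) (Fin n) ℝ) (hP : P.PosDef)
    (hlyap : P = γ • ((A + B * L)ᵀ * P * (A + B * L)) +
      γ • ((C + D * L)ᵀ * P * (C + D * L)) + Lᵀ * R * L + Q)
    (m0 : Matrix (Fin n) (Fin n) ℝ) (hm0 : m0.PosSemidef) :
    HasSum (fun k => γ ^ k * ((Q + Lᵀ * R * L) * momSeq (A + B * L) (C + D * L) W m0 k).trace)
      ((P * m0).trace + (γ / (1 - γ)) * (P * W).trace) :=
  stmt2_general A C B D L Q R W γ hQ hR hW hγ0 hγ1 P hP hlyap m0 hm0
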